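/- Adding a column to the input: let B̃ = [B b], Q̃w = [[Qw, qw],[qwᵀ, qw0]] ⪰ 0 (appropriately augmenting Qxw by column qxw), with P ⪰ 0 and no prior modification. Define g := qw + BᵀPb, g0 := qw0 + bᵀPb, h := qxw + AᵀPb, G := Qw + BᵀPB, H := Qxw + AᵀPB, F := Qx + AᵀPA. Then the Riccati step with the augmented matrices equals the Riccati step with the original matrices minus V⁻ C⁻† V⁻ᵀ, where V⁻ := h - H G† g and C⁻ := g0 - gᵀ G† g; moreover C⁻ ≥ 0 and V⁻ ∈ range(C⁻) (as a vector condition: V⁻ = 0 whenever C⁻ = 0). -/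

import Mathlib

open Matrix

/-!
Adding `P` at the next state to the stage cost yields the positive semidefinite matrix
`[[F, H'], [H'ᵀ, G']]` with `H' = [H h]`. Move the old input block `G` to the last position.
Positive semidefiniteness puts the off-diagonal blocks in the range of `G`, so the Schur
complement taken with the pseudoinverse `G⁺` is again positive semidefinite, and it equals
`[[F - H G⁺ Hᵀ, V], [Vᵀ, C]]`. This gives `C ⪰ 0` and `V C⁺ C = V`. For the identity,
`W = [H G⁺ - V C⁺ gᵀ G⁺, V C⁺]` solves `W G' = H'`, and any solution of `W G' = H'` gives
`H' G'⁺ H'ᵀ = H' Wᵀ`, which expands to `H G⁺ Hᵀ + V C⁺ Vᵀ`.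
-/

/-- The four Moore–Penrose conditions: `Dp` is the Moore–Penrose pseudoinverse of `D`. -/
def IsMP {α : Type*} [Fintype α] [DecidableEq α] (D Dp : Matrix α α ℝ) : Prop :=
  D * Dp * D = D ∧ Dp * D * Dp = Dp ∧ (D * Dp)ᵀ = D * Dp ∧ (Dp * D)ᵀ = Dp * D

namespace IsMP

variable {α β : Type*} [Fintype α] [DecidableEq α] {D Dp : Matrix α α ℝ}

theorem unique {P₁ P₂ : Matrix α α ℝ} (h₁ : IsMP D P₁) (h₂ : IsMP D P₂) : P₁ = P₂ := by
  obtain ⟨a₁, b₁, c₁, d₁⟩ := h₁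
  obtain ⟨a₂, b₂, c₂, d₂⟩ := h₂
  have hDP : D * P₂ = D * P₁ :=
    calc D * P₂ = (D * P₁ * D * P₂)ᵀ := by rw [a₁, c₂]
    _ = (D * P₂)ᵀ * (D * P₁)ᵀ := by rw [← transpose_mul, Matrix.mul_assoc (D * P₁)]
    _ = D * P₁ := by rw [c₁, c₂, ← Matrix.mul_assoc, a₂]
  have hPD : P₂ * D = P₁ * D :=
    calc P₂ * D = (P₂ * (D * P₁ * D))ᵀ := by rw [a₁, d₂]
    _ = (P₁ * D)ᵀ * (P₂ * D)ᵀ := by simp only [← transpose_mul, Matrix.mul_assoc]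
    _ = P₁ * D := by rw [d₁, d₂, Matrix.mul_assoc, ← Matrix.mul_assoc D, a₂]
  calc P₁ = P₁ * D * P₂ := by rw [Matrix.mul_assoc, hDP, ← Matrix.mul_assoc, b₁]
  _ = P₂ := by rw [← hPD, b₂]

theorem transpose (h : IsMP D Dp) : IsMP Dᵀ Dpᵀ := by
  obtain ⟨h₁, h₂, h₃, h₄⟩ := h
  refine ⟨?_, ?_, ?_, ?_⟩
  · rw [← transpose_mul, ← transpose_mul, ← Matrix.mul_assoc, h₁]
  · rw [← transpose_mul, ← transpose_mul, ← Matrix.mul_assoc, h₂]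
  · rw [← transpose_mul, transpose_transpose, h₄]
  · rw [← transpose_mul, transpose_transpose, h₃]

theorem isSymm (h : IsMP D Dp) (hD : D.IsSymm) : Dp.IsSymm :=
  unique (hD.eq ▸ h.transpose) h

theorem mul_mul_transpose_of_mul_eq (h : IsMP D Dp) (hD : D.IsSymm) {W H : Matrix β α ℝ}
    (hW : W * D = H) : H * Dp * Hᵀ = H * Wᵀ := by
  subst hW
  rw [transpose_mul, hD.eq]
  simp only [← Matrix.mul_assoc]
  rw [Matrix.mul_assoc W, Matrix.mul_assoc W, h.1]

end IsMP

namespace Matrix.PosSemidef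

variable {α β γ : Type*}

theorem toBlocks₂₂ {M : Matrix (α ⊕ β) (α ⊕ β) ℝ} (h : M.PosSemidef) :
    M.toBlocks₂₂.PosSemidef :=
  h.submatrix Sum.inr

variable [Fintype α] [DecidableEq α]

open scoped MatrixOrder in
theorem mul_eq_zero_of_transpose_mul_mul_eq_zero {M : Matrix α α ℝ} (hM : M.PosSemidef)
    {X : Matrix α γ ℝ} (h : Xᵀ * M * X = 0) : M * X = 0 := by
  obtain ⟨B, rfl⟩ := CStarAlgebra.nonneg_iff_eq_star_mul_self.mp hM.nonneg
  have hBX : B * X = 0 := by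
    rw [← conjTranspose_mul_self_eq_zero, conjTranspose_mul, conjTranspose_eq_transpose_of_trivial,
      ← h, star_eq_conjTranspose, Matrix.mul_assoc, Matrix.mul_assoc, Matrix.mul_assoc]
  rw [Matrix.mul_assoc, hBX, Matrix.mul_zero]

variable [Fintype β] [DecidableEq β] {F : Matrix α α ℝ} {H : Matrix α β ℝ}
  {G Gp : Matrix β β ℝ}

theorem mul_pinv_mul_of_fromBlocks (h : (fromBlocks F H Hᵀ G).PosSemidef) (hGp : IsMP G Gp) :
    H * Gp * G = H := by
  have hK : G * (1 - Gp * G) = 0 := by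
    rw [Matrix.mul_sub, Matrix.mul_one, ← Matrix.mul_assoc, hGp.1, sub_self]
  have hMK := h.mul_eq_zero_of_transpose_mul_mul_eq_zero (X := fromRows 0 (1 - Gp * G)) (by
    simp [Matrix.mul_assoc, fromBlocks_mul_fromRows, hK, transpose_fromRows, fromCols_mul_fromRows])
  rw [fromBlocks_mul_fromRows, hK, ← fromRows_zero, fromRows_ext_iff] at hMK
  rw [Matrix.mul_zero, zero_add, Matrix.mul_sub, Matrix.mul_one, sub_eq_zero,
    ← Matrix.mul_assoc] at hMK
  exact hMK.1.symm

theorem sub_mul_pinv_mul_transpose (h : (fromBlocks F H Hᵀ G).PosSemidef) (hGp : IsMP G Gp) :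
    (F - H * Gp * Hᵀ).PosSemidef := by
  have hX := h.mul_mul_conjTranspose_same (fromCols 1 (-(H * Gp)))
  rwa [conjTranspose_eq_transpose_of_trivial, fromCols_mul_fromBlocks,
    Matrix.neg_mul, Matrix.neg_mul, h.mul_pinv_mul_of_fromBlocks hGp, Matrix.one_mul,
    Matrix.one_mul, ← sub_eq_add_neg, add_neg_cancel, transpose_fromCols, fromCols_mul_fromRows,
    Matrix.zero_mul, add_zero, transpose_one, Matrix.mul_one] at hX

end Matrix.PosSemidef

section Downdate

variable {α β γ : Type*} {F : Matrix α α ℝ} {H : Matrix α β ℝ} {h : Matrix α γ ℝ}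
  {G Gp : Matrix β β ℝ} {g : Matrix β γ ℝ} {g₀ Cp : Matrix γ γ ℝ}
  {Gp' : Matrix (β ⊕ γ) (β ⊕ γ) ℝ}

theorem Matrix.PosSemidef.fromBlocks_fromRows_of_fromCols
    (hM : (fromBlocks F (fromCols H h) (fromCols H h)ᵀ (fromBlocks G g gᵀ g₀)).PosSemidef) :
    (fromBlocks (fromBlocks F h hᵀ g₀) (fromRows H gᵀ) (fromRows H gᵀ)ᵀ G).PosSemidef := by
  convert hM.submatrix (Sum.elim (Sum.elim Sum.inl (Sum.inr ∘ Sum.inr)) (Sum.inr ∘ Sum.inl))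
    using 1
  ext ((i | i) | i) ((j | j) | j) <;> simp

theorem fromBlocks_sub_fromRows_mul_mul_transpose [Fintype β] (hGp : Gp.IsSymm) :
    fromBlocks F h hᵀ g₀ - fromRows H gᵀ * Gp * (fromRows H gᵀ)ᵀ =
      fromBlocks (F - H * Gp * Hᵀ) (h - H * Gp * g) (h - H * Gp * g)ᵀ (g₀ - gᵀ * Gp * g) := by
  rw [transpose_fromRows, transpose_transpose, fromRows_mul, fromRows_mul_fromCols]
  simp only [sub_eq_add_neg, fromBlocks_neg, fromBlocks_add, transpose_add, transpose_neg,
    transpose_mul, hGp.eq, Matrix.mul_assoc]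

variable [Fintype β] [Fintype γ] [DecidableEq β] [DecidableEq γ]

theorem IsMP.fromCols_mul_mul_transpose_fromCols (hGp : IsMP G Gp)
    (hGp' : IsMP (fromBlocks G g gᵀ g₀) Gp') (hCp : IsMP (g₀ - gᵀ * Gp * g) Cp)
    (hG : G.IsSymm) (hg₀ : g₀.IsSymm) (hH : H * Gp * G = H) (hg : gᵀ * Gp * G = gᵀ)
    (hV : (h - H * Gp * g) * Cp * (g₀ - gᵀ * Gp * g) = h - H * Gp * g) :
    fromCols H h * Gp' * (fromCols H h)ᵀ =
      H * Gp * Hᵀ + (h - H * Gp * g) * Cp * (h - H * Gp * g)ᵀ := by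
  set V := h - H * Gp * g with hVdef
  have hGps : Gp.IsSymm := hGp.isSymm hG
  have hCps : Cp.IsSymm := hCp.isSymm (by
    simp only [IsSymm, transpose_sub, transpose_mul, transpose_transpose, hg₀.eq, hGps.eq,
      Matrix.mul_assoc])
  have hW : fromCols (H * Gp - V * Cp * (gᵀ * Gp)) (V * Cp) * fromBlocks G g gᵀ g₀ =
      fromCols H h := by
    rw [fromCols_mul_fromBlocks, fromCols_ext_iff]
    constructor
    · rw [Matrix.sub_mul, Matrix.mul_assoc (V * Cp), hg, hH, sub_add_cancel]
    · calc (H * Gp - V * Cp * (gᵀ * Gp)) * g + V * Cp * g₀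
          = H * Gp * g + V * Cp * (g₀ - gᵀ * Gp * g) := by
            simp only [Matrix.sub_mul, Matrix.mul_sub, Matrix.mul_assoc]; abel
        _ = h := by rw [hV, add_sub_cancel]
  rw [hGp'.mul_mul_transpose_of_mul_eq (hG.fromBlocks rfl hg₀) hW, transpose_fromCols,
    fromCols_mul_fromRows]
  simp only [transpose_sub, transpose_mul, hGps.eq, hCps.eq, transpose_transpose]
  rw [Matrix.mul_assoc V, hVdef]
  simp only [Matrix.mul_sub, Matrix.sub_mul, Matrix.mul_assoc]
  abel

theorem Matrix.PosSemidef.pinv_fromBlocks_downdate [Fintype α] [DecidableEq α]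
    (hM : (fromBlocks F (fromCols H h) (fromCols H h)ᵀ (fromBlocks G g gᵀ g₀)).PosSemidef)
    (hGp : IsMP G Gp) (hGp' : IsMP (fromBlocks G g gᵀ g₀) Gp')
    (hCp : IsMP (g₀ - gᵀ * Gp * g) Cp) :
    fromCols H h * Gp' * (fromCols H h)ᵀ =
        H * Gp * Hᵀ + (h - H * Gp * g) * Cp * (h - H * Gp * g)ᵀ ∧
      (g₀ - gᵀ * Gp * g).PosSemidef ∧
      (h - H * Gp * g) * Cp * (g₀ - gᵀ * Gp * g) = h - H * Gp * g := by
  have hM' := hM.fromBlocks_fromRows_of_fromCols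
  have hG : G.IsSymm := by simpa using hM'.toBlocks₂₂.isHermitian
  have hg₀ : g₀.IsSymm := by simpa using hM.toBlocks₂₂.toBlocks₂₂.isHermitian
  obtain ⟨hH, hg⟩ : H * Gp * G = H ∧ gᵀ * Gp * G = gᵀ := by
    simpa [fromRows_mul, fromRows_ext_iff] using hM'.mul_pinv_mul_of_fromBlocks hGp
  have hS := hM'.sub_mul_pinv_mul_transpose hGp
  rw [fromBlocks_sub_fromRows_mul_mul_transpose (hGp.isSymm hG)] at hS
  have hV := hS.mul_pinv_mul_of_fromBlocks hCp
  exact ⟨hGp.fromCols_mul_mul_transpose_fromCols hGp' hCp hG hg₀ hH hg hV,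
    by simpa using hS.toBlocks₂₂, hV⟩

end Downdate

section StageCost

variable {α β ι : Type*}

theorem Matrix.fromCols_add_fromCols (A₁ A₂ : Matrix ι α ℝ) (B₁ B₂ : Matrix ι β ℝ) :
    fromCols A₁ B₁ + fromCols A₂ B₂ = fromCols (A₁ + A₂) (B₁ + B₂) := by
  ext i (j | j) <;> simp

theorem fromBlocks_add_transpose_fromCols_mul_mul [Fintype ι] {Qx : Matrix α α ℝ}
    {Qxw : Matrix α β ℝ} {Qw : Matrix β β ℝ} {A : Matrix ι α ℝ} {B : Matrix ι β ℝ} {P : Matrix ι ι ℝ}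
    (hP : P.IsSymm) :
    fromBlocks Qx Qxw Qxwᵀ Qw + (fromCols A B)ᵀ * P * fromCols A B =
      fromBlocks (Qx + Aᵀ * P * A) (Qxw + Aᵀ * P * B) (Qxw + Aᵀ * P * B)ᵀ (Qw + Bᵀ * P * B) := by
  rw [transpose_fromCols, fromRows_mul, fromRows_mul_fromCols, fromBlocks_add]
  simp only [transpose_add, transpose_mul, transpose_transpose, hP.eq, Matrix.mul_assoc]

end StageCost

theorem riccati_add_column_downdate {n m : ℕ}
    (A : Matrix (Fin n) (Fin n) ℝ) (B : Matrix (Fin n) (Fin m) ℝ)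
    (b : Matrix (Fin n) (Fin 1) ℝ) (P : Matrix (Fin n) (Fin n) ℝ)
    (Qx : Matrix (Fin n) (Fin n) ℝ) (Qxw : Matrix (Fin n) (Fin m) ℝ)
    (qxw : Matrix (Fin n) (Fin 1) ℝ) (Qw : Matrix (Fin m) (Fin m) ℝ)
    (qw : Matrix (Fin m) (Fin 1) ℝ) (qw0 : Matrix (Fin 1) (Fin 1) ℝ)
    (Gp : Matrix (Fin m) (Fin m) ℝ)
    (Gp' : Matrix (Fin m ⊕ Fin 1) (Fin m ⊕ Fin 1) ℝ)
    (Cp : Matrix (Fin 1) (Fin 1) ℝ)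
    (hQ : (Matrix.fromBlocks Qx (Matrix.fromCols Qxw qxw)
            (Matrix.fromRows Qxwᵀ qxwᵀ)
            (Matrix.fromBlocks Qw qw qwᵀ qw0)).PosSemidef)
    (hP : P.PosSemidef)
    (hGp : IsMP (Qw + Bᵀ * P * B) Gp)
    (hGp' : IsMP (Matrix.fromBlocks (Qw + Bᵀ * P * B) (qw + Bᵀ * P * b)
            (qw + Bᵀ * P * b)ᵀ (qw0 + bᵀ * P * b)) Gp')
    (hCp : IsMP ((qw0 + bᵀ * P * b) -
            (qw + Bᵀ * P * b)ᵀ * Gp * (qw + Bᵀ * P * b)) Cp) :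
    ((Qx + Aᵀ * P * A) -
      (Matrix.fromCols (Qxw + Aᵀ * P * B) (qxw + Aᵀ * P * b)) * Gp' *
        (Matrix.fromCols (Qxw + Aᵀ * P * B) (qxw + Aᵀ * P * b))ᵀ =
    ((Qx + Aᵀ * P * A) - (Qxw + Aᵀ * P * B) * Gp * (Qxw + Aᵀ * P * B)ᵀ) -
      ((qxw + Aᵀ * P * b) - (Qxw + Aᵀ * P * B) * Gp * (qw + Bᵀ * P * b)) * Cp *
        ((qxw + Aᵀ * P * b) - (Qxw + Aᵀ * P * B) * Gp * (qw + Bᵀ * P * b))ᵀ) ∧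
    ((qw0 + bᵀ * P * b) - (qw + Bᵀ * P * b)ᵀ * Gp * (qw + Bᵀ * P * b)).PosSemidef ∧
    ((qw0 + bᵀ * P * b) - (qw + Bᵀ * P * b)ᵀ * Gp * (qw + Bᵀ * P * b) = 0 →
      (qxw + Aᵀ * P * b) - (Qxw + Aᵀ * P * B) * Gp * (qw + Bᵀ * P * b) = 0) := by
  have hPs : P.IsSymm := by simpa using hP.isHermitian
  have hM := hQ.add (hP.conjTranspose_mul_mul_same (fromCols A (fromCols B b)))
  rw [conjTranspose_eq_transpose_of_trivial, ← transpose_fromCols,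
    fromBlocks_add_transpose_fromCols_mul_mul hPs, fromBlocks_add_transpose_fromCols_mul_mul hPs,
    mul_fromCols, fromCols_add_fromCols] at hM
  obtain ⟨hDowndate, hC, hV⟩ := hM.pinv_fromBlocks_downdate hGp hGp' hCp
  exact ⟨by rw [hDowndate, sub_add_eq_sub_sub], hC, fun hC₀ => by rw [← hV, hC₀, Matrix.mul_zero]⟩
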